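/- Let X be a finite set of at least 2 points in general position and x a vertex of the convex hull of X. Then there exists an ordering of X starting at x whose straight-line path is non-self-intersecting; moreover, the path can be chosen so that its final point is any prescribed point y ∈ X \ {x}. -/

import Mathlib

/-! Induction on `|X|`. Seen from the hull vertex `x`, the other points lie in an angle smaller
than `π`, whose two bounding rays pass through distinct points `z₁`, `z₂` of `X` (general
position); one of them, `z`, differs from `y`. All of `X \ {x, z}` lies strictly on one side of
the line `xz`, so `z` is a hull vertex of `X \ {x}`, and a crossing-free path from `z` to `y`
through `X \ {x}` stays crossing-free after prepending `x`: the new edge lies on the line, every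
old edge strictly on one side of it except the first, which meets it only at `z`. -/

open scoped Classical

noncomputable section

abbrev Pt : Type := ℝ × ℝ

/-- Signed value of `z` with respect to the line `a x + b y + c = 0`. -/
def sideVal (a b c : ℝ) (z : Pt) : ℝ := a * z.1 + b * z.2 + c

/-- The segment `[u,v]` crosses the line: endpoints strictly on opposite sides. -/
def crossesLine (a b c : ℝ) (u v : Pt) : Prop := sideVal a b c u * sideVal a b c v < 0

/-- Planar determinant of two vectors. -/
def det2 (u v : Pt) : ℝ := u.1 * v.2 - u.2 * v.1

/-- `w` lies in the closed convex cone spanned by `u` and `v`. -/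
def memCone (u v w : Pt) : Prop := ∃ s t : ℝ, 0 ≤ s ∧ 0 ≤ t ∧ w = s • u + t • v

/-- No three points of `X` are collinear. -/
def GenPos (X : Finset Pt) : Prop :=
  ∀ x ∈ X, ∀ y ∈ X, ∀ z ∈ X, x ≠ y → x ≠ z → y ≠ z → ¬ Collinear ℝ ({x, y, z} : Set Pt)

/-- Edges of a straight-line path visiting the points of `l` in order. -/
def pathEdges (l : List Pt) : List (Pt × Pt) := l.zip l.tail

def segOf (e : Pt × Pt) : Set Pt := segment ℝ e.1 e.2

/-- Non-adjacent edges are disjoint; adjacent edges meet only at the shared vertex. -/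
def NonSelfIntersecting (l : List Pt) : Prop :=
  (∀ i j, ∀ hi : i < (pathEdges l).length, ∀ hj : j < (pathEdges l).length, i + 1 < j →
    segOf ((pathEdges l).get ⟨i, hi⟩) ∩ segOf ((pathEdges l).get ⟨j, hj⟩) = ∅) ∧
  (∀ i, ∀ hi : i < (pathEdges l).length, ∀ hj : i + 1 < (pathEdges l).length,
    segOf ((pathEdges l).get ⟨i, hi⟩) ∩ segOf ((pathEdges l).get ⟨i + 1, hj⟩)
      = {((pathEdges l).get ⟨i + 1, hj⟩).1})

/-- Number of edges of the path crossing the line `a x + b y + c = 0`. -/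
def crossCount (a b c : ℝ) (l : List Pt) : ℕ :=
  ((pathEdges l).filter (fun e => decide (crossesLine a b c e.1 e.2))).length

/-- The `i`-th edge of the cycle on the points of `l` (indices mod `l.length`). -/
def cEdge (l : List Pt) (i : ℕ) (hi : i < l.length) : Set Pt :=
  segment ℝ (l.get ⟨i, hi⟩)
    (l.get ⟨(i + 1) % l.length, Nat.mod_lt _ (Nat.lt_of_le_of_lt (Nat.zero_le i) hi)⟩)

/-- Simple polygon condition for the cycle through `l`. -/
def CycleNSI (l : List Pt) : Prop :=
  ∀ i j, ∀ hi : i < l.length, ∀ hj : j < l.length, i ≠ j →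
    ((i + 1) % l.length = j → cEdge l i hi ∩ cEdge l j hj = {l.get ⟨j, hj⟩}) ∧
    ((j + 1) % l.length = i → cEdge l i hi ∩ cEdge l j hj = {l.get ⟨i, hi⟩}) ∧
    ((i + 1) % l.length ≠ j → (j + 1) % l.length ≠ i → cEdge l i hi ∩ cEdge l j hj = ∅)

/-- Number of edges of the cycle on `l` crossing the line. -/
def cycleCrossCount (a b c : ℝ) (l : List Pt) : ℕ :=
  (Finset.univ.filter (fun i : Fin l.length =>
    crossesLine a b c (l.get i)
      (l.get ⟨(i.1 + 1) % l.length,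
        Nat.mod_lt _ (Nat.lt_of_le_of_lt (Nat.zero_le i.1) i.2)⟩))).card

lemma det2_self (u : Pt) : det2 u u = 0 := by
  rw [det2]; ring

lemma det2_swap (u v : Pt) : det2 u v = -det2 v u := by
  rw [det2, det2]; ring

lemma collinear_of_det2_sub_eq_zero {x p q : Pt} (hpx : p ≠ x) (h : det2 (p - x) (q - x) = 0) :
    Collinear ℝ ({x, p, q} : Set Pt) := by
  obtain ⟨r, hr⟩ : ∃ r : ℝ, q - x = r • (p - x) := by
    simp only [det2, Prod.fst_sub, Prod.snd_sub] at h
    by_cases h1 : p.1 - x.1 = 0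
    · have h2 : p.2 - x.2 ≠ 0 := fun h2 ↦ hpx (Prod.ext (by linarith) (by linarith))
      have h3 : q.1 - x.1 = 0 := by
        rw [h1, zero_mul, zero_sub, neg_eq_zero] at h
        exact (mul_eq_zero.mp h).resolve_left h2
      refine ⟨(q.2 - x.2) / (p.2 - x.2), Prod.ext ?_ ?_⟩
      · simp [h1, h3]
      · simp only [Prod.snd_sub, Prod.smul_snd, smul_eq_mul]; field_simp
    · refine ⟨(q.1 - x.1) / (p.1 - x.1), Prod.ext ?_ ?_⟩
      · simp only [Prod.fst_sub, Prod.smul_fst, smul_eq_mul]; field_simp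
      · simp only [Prod.snd_sub, Prod.smul_snd, smul_eq_mul]; field_simp; linarith
  rw [show ({x, p, q} : Set Pt) = {q, x, p} by
    ext; simp only [Set.mem_insert_iff, Set.mem_singleton_iff]; tauto]
  have hq : q = AffineMap.lineMap x p r := by
    rw [AffineMap.lineMap_apply_module', ← hr, sub_add_cancel]
  exact collinear_insert_of_mem_affineSpan_pair (hq ▸ AffineMap.lineMap_mem_affineSpan_pair r x p)

lemma GenPos.det2_sub_ne_zero {X : Finset Pt} (hgp : GenPos X) {x p q : Pt} (hx : x ∈ X)
    (hp : p ∈ X.erase x) (hq : q ∈ X.erase x) (hpq : p ≠ q) : det2 (p - x) (q - x) ≠ 0 :=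
  fun h ↦ hgp x hx p (Finset.mem_of_mem_erase hp) q (Finset.mem_of_mem_erase hq)
    (Finset.ne_of_mem_erase hp).symm (Finset.ne_of_mem_erase hq).symm hpq
    (collinear_of_det2_sub_eq_zero (Finset.ne_of_mem_erase hp) h)

lemma GenPos.mono {X Y : Finset Pt} (hgp : GenPos X) (h : Y ⊆ X) : GenPos Y :=
  fun a ha b hb c hc ↦ hgp a (h ha) b (h hb) c (h hc)

def sideMap (x z : Pt) : Pt →ᵃ[ℝ] ℝ where
  toFun p := det2 (z - x) (p - x)
  linear := (z - x).1 • LinearMap.snd ℝ ℝ ℝ - (z - x).2 • LinearMap.fst ℝ ℝ ℝ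
  map_vadd' p v := by
    simp only [det2, vadd_eq_add, Prod.fst_sub, Prod.snd_sub, Prod.fst_add, Prod.snd_add,
      LinearMap.sub_apply, LinearMap.smul_apply, LinearMap.snd_apply, LinearMap.fst_apply,
      smul_eq_mul]
    ring

lemma sideMap_apply (x z p : Pt) : sideMap x z p = det2 (z - x) (p - x) := rfl

@[simp]
lemma sideMap_apply_left (x z : Pt) : sideMap x z x = 0 := by
  simp [sideMap_apply, det2]

@[simp]
lemma sideMap_apply_right (x z : Pt) : sideMap x z z = 0 := det2_self _

section AffineFunctional

variable {E : Type*} [AddCommGroup E] [Module ℝ E] (F : E →ᵃ[ℝ] ℝ)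

lemma AffineMap.pos_of_mem_segment {a b p : E} (ha : 0 < F a) (hb : 0 < F b)
    (hp : p ∈ segment ℝ a b) : 0 < F p :=
  ((convex_Ioi 0).affine_preimage F).segment_subset ha hb hp

lemma AffineMap.eq_zero_of_mem_segment {a b p : E} (ha : F a = 0) (hb : F b = 0)
    (hp : p ∈ segment ℝ a b) : F p = 0 :=
  ((convex_singleton 0).affine_preimage F).segment_subset ha hb hp

lemma AffineMap.eq_left_of_mem_segment {a b p : E} (ha : F a = 0) (hb : 0 < F b)
    (hp : p ∈ segment ℝ a b) (hFp : F p = 0) : p = a := by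
  rw [segment_eq_image_lineMap] at hp
  obtain ⟨θ, -, rfl⟩ := hp
  rw [AffineMap.apply_lineMap, ha, AffineMap.lineMap_apply_module, smul_zero, zero_add,
    smul_eq_mul, mul_eq_zero, or_iff_left hb.ne'] at hFp
  rw [hFp, AffineMap.lineMap_apply_zero]

lemma AffineMap.notMem_convexHull {s : Set E} {z : E} (hs : ∀ p ∈ s, 0 < F p) (hz : F z ≤ 0) :
    z ∉ convexHull ℝ s :=
  fun h ↦ hz.not_gt (convexHull_min hs ((convex_Ioi 0).affine_preimage F) h)

end AffineFunctional

lemma exists_pos_of_notMem_convexHull {S : Finset Pt} {x : Pt}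
    (hx : x ∉ convexHull ℝ (S : Set Pt)) :
    ∃ a b : ℝ, ∀ p ∈ S, 0 < a * (p - x).1 + b * (p - x).2 := by
  obtain ⟨f, u, hfx, hfS⟩ := geometric_hahn_banach_point_closed (convex_convexHull ℝ _)
    (S.finite_toSet.isCompact_convexHull ℝ).isClosed hx
  have hf : ∀ v : Pt, f v = f (1, 0) * v.1 + f (0, 1) * v.2 := fun v ↦ by
    conv_lhs => rw [show v = v.1 • ((1 : ℝ), (0 : ℝ)) + v.2 • ((0 : ℝ), (1 : ℝ)) by ext <;> simp]
    rw [map_add, map_smul, map_smul, smul_eq_mul, smul_eq_mul, mul_comm, mul_comm v.2]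
  refine ⟨f (1, 0), f (0, 1), fun p hp ↦ ?_⟩
  have := hfS p (subset_convexHull ℝ _ hp)
  rw [← hf, map_sub]
  linarith

/-- The fractions are the slopes of `u` and `v` in the frame with axes `(a, b)` and `(-b, a)`. -/
lemma slope_lt_of_det2_pos {a b : ℝ} {u v : Pt} (hu : 0 < a * u.1 + b * u.2)
    (hv : 0 < a * v.1 + b * v.2) (h : 0 < det2 u v) :
    (-b * u.1 + a * u.2) / (a * u.1 + b * u.2) < (-b * v.1 + a * v.2) / (a * v.1 + b * v.2) := by
  have hab : 0 < a ^ 2 + b ^ 2 := by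
    by_contra! hab
    have ha : a = 0 := by nlinarith
    have hb : b = 0 := by nlinarith
    simp [ha, hb] at hu
  have key : (-b * v.1 + a * v.2) * (a * u.1 + b * u.2) - (-b * u.1 + a * u.2) * (a * v.1 + b * v.2)
      = (a ^ 2 + b ^ 2) * det2 u v := by
    rw [det2]; ring
  rw [div_lt_div_iff₀ hu hv]
  nlinarith [mul_pos hab h]

lemma exists_tangent_pair {S : Finset Pt} {x : Pt} (hS : 2 ≤ S.card)
    (hdet : ∀ p ∈ S, ∀ q ∈ S, p ≠ q → det2 (p - x) (q - x) ≠ 0)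
    (hx : x ∉ convexHull ℝ (S : Set Pt)) :
    ∃ z₁ ∈ S, ∃ z₂ ∈ S, z₁ ≠ z₂ ∧ (∀ q ∈ S, q ≠ z₁ → 0 < det2 (z₁ - x) (q - x)) ∧
      ∀ q ∈ S, q ≠ z₂ → det2 (z₂ - x) (q - x) < 0 := by
  -- `z₁` and `z₂` are the points of least and greatest slope as seen from `x`.
  obtain ⟨a, b, hpos⟩ := exists_pos_of_notMem_convexHull hx
  let slope (p : Pt) : ℝ := (-b * (p - x).1 + a * (p - x).2) / (a * (p - x).1 + b * (p - x).2)
  have hslope {p q} (hp : p ∈ S) (hq : q ∈ S) (h : 0 < det2 (p - x) (q - x)) :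
      slope p < slope q :=
    slope_lt_of_det2_pos (hpos p hp) (hpos q hq) h
  have hne : S.Nonempty := Finset.card_pos.mp (by omega)
  obtain ⟨z₁, hz₁, hmin⟩ := S.exists_min_image slope hne
  obtain ⟨z₂, hz₂, hmax⟩ := S.exists_max_image slope hne
  have h₁ : ∀ q ∈ S, q ≠ z₁ → 0 < det2 (z₁ - x) (q - x) := fun q hq hqz ↦
    (hdet z₁ hz₁ q hq (Ne.symm hqz)).lt_or_gt.resolve_left fun h ↦
      (hmin q hq).not_gt (hslope hq hz₁ (by rw [det2_swap]; linarith))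
  have h₂ : ∀ q ∈ S, q ≠ z₂ → det2 (z₂ - x) (q - x) < 0 := fun q hq hqz ↦
    (hdet z₂ hz₂ q hq (Ne.symm hqz)).lt_or_gt.resolve_right fun h ↦
      (hmax q hq).not_gt (hslope hz₂ hq h)
  refine ⟨z₁, hz₁, z₂, hz₂, ?_, h₁, h₂⟩
  rintro rfl
  obtain ⟨q, hq, hqz⟩ := S.exists_mem_ne (by omega) z₁
  linarith [h₁ q hq hqz, h₂ q hq hqz]

lemma exists_supportingLine_ne {X : Finset Pt} (hX : 3 ≤ X.card) (hgp : GenPos X) {x : Pt}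
    (hx : x ∈ X) (hvert : x ∉ convexHull ℝ ((X.erase x : Finset Pt) : Set Pt)) (y : Pt) :
    ∃ z ∈ X.erase x, z ≠ y ∧ ∃ F : Pt →ᵃ[ℝ] ℝ, F x = 0 ∧ F z = 0 ∧
      ∀ q ∈ X.erase x, q ≠ z → 0 < F q := by
  have hcard : 2 ≤ (X.erase x).card := by rw [Finset.card_erase_of_mem hx]; omega
  obtain ⟨z₁, hz₁, z₂, hz₂, hz₁₂, h₁, h₂⟩ :=
    exists_tangent_pair hcard (fun p hp q hq ↦ hgp.det2_sub_ne_zero hx hp hq) hvert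
  by_cases hy : z₁ = y
  · refine ⟨z₂, hz₂, hy ▸ hz₁₂.symm, -sideMap x z₂, by simp, by simp, fun q hq hqz ↦ ?_⟩
    simpa [sideMap_apply] using h₂ q hq hqz
  · exact ⟨z₁, hz₁, hy, sideMap x z₁, by simp, by simp, h₁⟩

lemma nonSelfIntersecting_pair (a b : Pt) : NonSelfIntersecting [a, b] :=
  ⟨fun i j _ hj _ ↦ by simp [pathEdges] at hj; omega, fun i _ hj ↦ by simp [pathEdges] at hj⟩

lemma NonSelfIntersecting.cons {x z : Pt} {t : List Pt} (h : NonSelfIntersecting (z :: t))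
    (hadj : ∀ w ∈ t.head?, segment ℝ x z ∩ segment ℝ z w = {z})
    (hdisj : ∀ e ∈ pathEdges t, segment ℝ x z ∩ segOf e = ∅) :
    NonSelfIntersecting (x :: z :: t) := by
  obtain ⟨hfar, hnear⟩ := h
  rcases t with _ | ⟨w, t⟩
  · exact nonSelfIntersecting_pair x z
  refine ⟨fun i j hi hj hij ↦ ?_, fun i hi hj ↦ ?_⟩
  · rcases i with _ | i
    · obtain ⟨j, rfl⟩ : ∃ k, j = k + 2 := ⟨j - 2, by omega⟩
      exact hdisj _ (List.get_mem _ _)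
    · obtain ⟨j, rfl⟩ : ∃ k, j = k + 1 := ⟨j - 1, by omega⟩
      exact hfar i j _ _ (by omega)
  · rcases i with _ | i
    · exact hadj w rfl
    · exact hnear i (Nat.lt_of_succ_lt_succ hi) (Nat.lt_of_succ_lt_succ hj)

lemma NonSelfIntersecting.cons_of_affineMap (F : Pt →ᵃ[ℝ] ℝ) {x z : Pt} {t : List Pt}
    (h : NonSelfIntersecting (z :: t)) (hx : F x = 0) (hz : F z = 0) (ht : ∀ p ∈ t, 0 < F p) :
    NonSelfIntersecting (x :: z :: t) := by
  refine h.cons (fun w hw ↦ ?_) (fun e he ↦ ?_)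
  · have hw : 0 < F w := ht w (List.mem_of_mem_head? hw)
    ext p
    simp only [Set.mem_inter_iff, Set.mem_singleton_iff]
    refine ⟨fun ⟨hxz, hzw⟩ ↦ F.eq_left_of_mem_segment hz hw hzw
      (F.eq_zero_of_mem_segment hx hz hxz), ?_⟩
    rintro rfl
    exact ⟨right_mem_segment _ _ _, left_mem_segment _ _ _⟩
  · obtain ⟨h₁, h₂⟩ := List.of_mem_zip he
    refine Set.eq_empty_of_forall_notMem fun p ⟨hxz, hp⟩ ↦ ?_
    exact (F.pos_of_mem_segment (ht _ h₁) (ht _ (List.mem_of_mem_tail h₂)) hp).ne'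
      (F.eq_zero_of_mem_segment hx hz hxz)

/-- Crossing-free Hamiltonian path from a hull vertex `x` to any prescribed `y`. -/
theorem stmt18 (X : Finset Pt) (hX : 2 ≤ X.card) (hgp : GenPos X)
    (x : Pt) (hx : x ∈ X) (hvert : x ∉ convexHull ℝ ((X.erase x : Finset Pt) : Set Pt))
    (y : Pt) (hy : y ∈ X) (hxy : y ≠ x) :
    ∃ l : List Pt, l.Nodup ∧ l.toFinset = X ∧ l.head? = some x ∧ l.getLast? = some y ∧
      NonSelfIntersecting l := by
  induction X using Finset.strongInduction generalizing x with
  | H X ih =>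
  rcases hX.eq_or_lt with hX | hX
  · have hXxy : X = {x, y} := (Finset.eq_of_subset_of_card_le
      (by simp [Finset.insert_subset_iff, hx, hy]) (by rw [← hX, Finset.card_pair hxy.symm])).symm
    exact ⟨[x, y], by simp [hxy.symm], by simp [hXxy], rfl, rfl, nonSelfIntersecting_pair x y⟩
  obtain ⟨z, hz, hzy, F, hFx, hFz, hF⟩ := exists_supportingLine_ne hX hgp hx hvert y
  have hvert' : z ∉ convexHull ℝ (((X.erase x).erase z : Finset Pt) : Set Pt) :=
    F.notMem_convexHull (fun q hq ↦ hF q (Finset.mem_of_mem_erase hq) (Finset.ne_of_mem_erase hq))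
      hFz.le
  obtain ⟨l, hnd, hl, hhead, hlast, hnsi⟩ := ih (X.erase x) (Finset.erase_ssubset hx)
    (by rw [Finset.card_erase_of_mem hx]; omega) (hgp.mono (Finset.erase_subset x X)) z hz hvert'
    (Finset.mem_erase.mpr ⟨hxy, hy⟩) hzy.symm
  obtain ⟨t, rfl⟩ := List.head?_eq_some_iff.mp hhead
  have hmem {p} (hp : p ∈ z :: t) : p ∈ X.erase x := hl ▸ List.mem_toFinset.mpr hp
  refine ⟨x :: z :: t, List.nodup_cons.mpr ⟨fun h ↦ Finset.notMem_erase x X (hmem h), hnd⟩,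
    by rw [List.toFinset_cons, hl, Finset.insert_erase hx], rfl,
    by rwa [List.getLast?_cons_cons], hnsi.cons_of_affineMap F hFx hFz fun p hp ↦ ?_⟩
  exact hF p (hmem (List.mem_cons_of_mem z hp)) fun h ↦ (List.nodup_cons.mp hnd).1 (h ▸ hp)
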